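/- Let F ∈ H_Z with p₂(F) ∈ L^∞(𝕋), and let C_F : L²(𝕋) → H_Z be the bounded operator with C_F(α) = π_Z(α)F. Then the following are equivalent: (i) M̃(F) = F; (ii) C_F S₀ = Ũ C_F as operators from L²(𝕋) to H_Z. -/

import Mathlib

open MeasureTheory Complex Real Filter Topology

noncomputable section

/-- The normalized Haar measure `μ` of the circle `𝕋`, realized on the fundamental
domain `(0, 2π]` of `ℝ` via the identification `z = e^{-iω}`. -/
def muT : Measure ℝ := (ENNReal.ofReal (2 * π))⁻¹ • (volume.restrict (Set.Ioc 0 (2 * π)))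

/-- The measure on `𝕋 × [0,1]` underlying the Hilbert space `H_Z` (Zak-transform side). -/
def muZ : Measure (ℝ × ℝ) := muT.prod (volume.restrict (Set.Ioc 0 1))

/-- `L²(𝕋)`. -/
abbrev L2T : Type := MeasureTheory.Lp ℂ 2 muT

/-- The Hilbert space `H_Z ≃ L²(𝕋 × [0,1])`, the range of the Zak transform. -/
abbrev HZ : Type := MeasureTheory.Lp ℂ 2 muZ

/-- Quasi-periodicity characterizing membership of a function in `H_Z`:
`2π`-periodicity in the `ω`-coordinate and `H(z, x + n) = z^{-n} H(z, x)`,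
i.e. `H(ω, x + n) = e^{inω} H(ω, x)`. -/
def QP (H : ℝ × ℝ → ℂ) : Prop :=
  (∀ ω x : ℝ, H (ω + 2 * π, x) = H (ω, x)) ∧
    ∀ (ω x : ℝ) (n : ℤ),
      H (ω, x + (n : ℝ)) = Complex.exp (Complex.I * (n : ℂ) * (ω : ℂ)) * H (ω, x)

/-- `T = π_Z(m)`, multiplication by `m(z)` on `H_Z`. -/
def IsMulOp (m : ℝ → ℂ) (T : HZ →L[ℂ] HZ) : Prop :=
  ∀ H : HZ, ⇑(T H) =ᵐ[muZ] fun p : ℝ × ℝ => m p.1 * (⇑H) p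

/-- `Ut` is the unitary `Ũ` on `H_Z`:
`(ŨH)(z,x) = 2^{-1/2} (H(z², x/2) + z·H(z², (x+1)/2))`, characterized on quasi-periodic
representatives (`z = e^{-iω}`). -/
def IsUt (Ut : HZ ≃ₗᵢ[ℂ] HZ) : Prop :=
  ∀ H : ℝ × ℝ → ℂ, Measurable H → QP H →
    ∀ hH : MeasureTheory.MemLp H 2 muZ,
      ⇑(Ut (hH.toLp H)) =ᵐ[muZ] fun p : ℝ × ℝ =>
        ((Real.sqrt 2 : ℝ) : ℂ)⁻¹ *
          (H (2 * p.1, p.2 / 2) +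
            Complex.exp (-(Complex.I * (p.1 : ℂ))) * H (2 * p.1, (p.2 + 1) / 2))

/-- `S` is the operator `(Sf)(z) = m(z) f(z²)` on `L²(𝕋)`, characterized on
`2π`-periodic representatives. -/
def IsSOp (m : ℝ → ℂ) (S : L2T →L[ℂ] L2T) : Prop :=
  ∀ f : ℝ → ℂ, Measurable f → (∀ ω, f (ω + 2 * π) = f ω) →
    ∀ hf : MeasureTheory.MemLp f 2 muT,
      ⇑(S (hf.toLp f)) =ᵐ[muT] fun ω : ℝ => m ω * f (2 * ω)

/-! Both sides of (ii) are multiplication operators against `F`. If `a` is a periodic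
representative of `α`, then `C_F S₀ α = m₀(z) a(z²) F`, while the formula for `Ũ` gives the
covariance `Ũ π_Z(a) = π_Z(a(z²)) Ũ`, so `Ũ C_F α = a(z²) Ũ F`. Hence (i), read as
`π_Z(m₀) F = Ũ F`, gives (ii); conversely (ii) at `α = 1` is `π_Z(m₀) F = Ũ F`. -/

instance : IsFiniteMeasure muT := by
  refine ⟨?_⟩
  rw [muT, Measure.smul_apply, smul_eq_mul]
  exact ENNReal.mul_lt_top (ENNReal.inv_lt_top.2 (ENNReal.ofReal_pos.2 (by positivity)))
    (measure_lt_top _ _)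

lemma measurable_toIocMod {p : ℝ} (hp : 0 < p) (a : ℝ) : Measurable (toIocMod hp a) := by
  rw [funext (toIocMod_eq_sub_fract_mul hp a)]
  fun_prop

lemma exists_measurable_periodic_ae_eq {E : Type*} [MeasurableSpace E] {f : ℝ → E}
    (hf : AEMeasurable f muT) :
    ∃ g : ℝ → E, Measurable g ∧ Function.Periodic g (2 * π) ∧ f =ᵐ[muT] g := by
  have hpos : (0 : ℝ) < 2 * π := by positivity
  refine ⟨hf.mk f ∘ toIocMod hpos 0, hf.measurable_mk.comp (measurable_toIocMod hpos 0),
    fun ω => by simp only [Function.comp_apply, toIocMod_add_right], ?_⟩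
  refine hf.ae_eq_mk.trans ?_
  have : ∀ᵐ ω ∂volume.restrict (Set.Ioc 0 (2 * π)), hf.mk f ω = hf.mk f (toIocMod hpos 0 ω) :=
    ae_restrict_of_forall_mem measurableSet_Ioc fun ω hω => by
      rw [(toIocMod_eq_self hpos).2 (by simpa using hω)]
  exact Measure.ae_smul_measure this _

lemma ae_eq_comp_fst {E : Type*} {f g : ℝ → E} (h : f =ᵐ[muT] g) :
    (fun p : ℝ × ℝ => f p.1) =ᵐ[muZ] fun p => g p.1 :=
  Measure.quasiMeasurePreserving_fst.ae_eq_comp h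

lemma QP.mul_fst {F : ℝ × ℝ → ℂ} (hF : QP F) {a : ℝ → ℂ} (ha : Function.Periodic a (2 * π)) :
    QP fun p => a p.1 * F p := by
  refine ⟨fun ω x => by simp only [ha ω, hF.1], fun ω x n => ?_⟩
  simp only [hF.2 ω x n]
  ring

lemma MeasureTheory.Lp.eq_toLp_of_ae_eq {α E : Type*} [MeasurableSpace α] [NormedAddCommGroup E]
    {p : ENNReal} {μ : Measure α} (f : Lp E p μ) {g : α → E} (h : f =ᵐ[μ] g) :
    f = ((Lp.memLp f).ae_eq h).toLp g :=
  Lp.ext (h.trans (MemLp.coeFn_toLp _).symm)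

lemma coeFn_ae_eq_mul_fst {F : ℝ × ℝ → ℂ} {CF : L2T →L[ℂ] HZ}
    (hCF : ∀ (α : ℝ → ℂ), Measurable α → ∀ hα : MemLp α 2 muT,
      ⇑(CF (hα.toLp α)) =ᵐ[muZ] fun p : ℝ × ℝ => α p.1 * F p) (α : L2T) :
    ⇑(CF α) =ᵐ[muZ] fun p => α p.1 * F p := by
  have hα := (Lp.aestronglyMeasurable α).aemeasurable
  rw [Lp.eq_toLp_of_ae_eq α hα.ae_eq_mk]
  refine (hCF _ hα.measurable_mk _).trans ?_
  exact (ae_eq_comp_fst (MemLp.coeFn_toLp _).symm).mul .rfl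

lemma IsUt.ae_eq_mul_fst {Ut : HZ ≃ₗᵢ[ℂ] HZ} (hUt : IsUt Ut) {F : ℝ × ℝ → ℂ}
    (hF_meas : Measurable F) (hF_qp : QP F) (hF_mem : MemLp F 2 muZ) {a : ℝ → ℂ}
    (ha_meas : Measurable a) (ha_per : Function.Periodic a (2 * π))
    (hH : MemLp (fun p : ℝ × ℝ => a p.1 * F p) 2 muZ) :
    ⇑(Ut (hH.toLp _)) =ᵐ[muZ] fun p => a (2 * p.1) * Ut (hF_mem.toLp F) p := by
  have hH_meas : Measurable fun p : ℝ × ℝ => a p.1 * F p :=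
    (ha_meas.comp measurable_fst).mul hF_meas
  filter_upwards [hUt _ hH_meas (hF_qp.mul_fst ha_per) hH, hUt F hF_meas hF_qp hF_mem]
    with p hH hF
  rw [hH, hF]
  ring

theorem scaling_eq_iff_intertwines_general
    (m₀ : ℝ → ℂ)
    (F : ℝ × ℝ → ℂ) (hF_meas : Measurable F) (hF_qp : QP F)
    (hF_mem : MeasureTheory.MemLp F 2 muZ)
    (Ut : HZ ≃ₗᵢ[ℂ] HZ) (hUt : IsUt Ut)
    (Tm : HZ →L[ℂ] HZ) (hTm : IsMulOp m₀ Tm)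
    (S₀ : L2T →L[ℂ] L2T) (hS₀ : IsSOp m₀ S₀)
    (CF : L2T →L[ℂ] HZ)
    (hCF : ∀ (α : ℝ → ℂ), Measurable α → ∀ hα : MeasureTheory.MemLp α 2 muT,
      ⇑(CF (hα.toLp α)) =ᵐ[muZ] fun p : ℝ × ℝ => α p.1 * F p) :
    Ut.symm (Tm (hF_mem.toLp F)) = hF_mem.toLp F ↔
      ∀ α : L2T, CF (S₀ α) = Ut (CF α) := by
  have hTmF : ⇑(Tm (hF_mem.toLp F)) =ᵐ[muZ] fun p => m₀ p.1 * F p :=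
    (hTm _).trans (hF_mem.coeFn_toLp.mono fun p hp => by simp only [hp])
  rw [LinearIsometryEquiv.symm_apply_eq]
  constructor
  · intro h α
    obtain ⟨a, ha_meas, ha_per, hαa⟩ :=
      exists_measurable_periodic_ae_eq (Lp.aestronglyMeasurable α).aemeasurable
    have hS₀α : ⇑(S₀ α) =ᵐ[muT] fun ω => m₀ ω * a (2 * ω) := by
      rw [Lp.eq_toLp_of_ae_eq α hαa]
      exact hS₀ a ha_meas ha_per _
    have hCFα := Lp.eq_toLp_of_ae_eq _
      ((coeFn_ae_eq_mul_fst hCF α).trans ((ae_eq_comp_fst hαa).mul .rfl))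
    refine Lp.ext ?_
    filter_upwards [coeFn_ae_eq_mul_fst hCF (S₀ α), ae_eq_comp_fst hS₀α, hTmF,
      hCFα ▸ hUt.ae_eq_mul_fst hF_meas hF_qp hF_mem ha_meas ha_per _] with p hCFS hS hT hU
    rw [hCFS, hS, hU, ← h, hT]
    ring
  · intro h
    have hone : MemLp (fun _ : ℝ => (1 : ℂ)) 2 muT := memLp_const 1
    have hCF_one : CF (hone.toLp _) = hF_mem.toLp F := Lp.ext <| by
      filter_upwards [hCF _ measurable_const hone, hF_mem.coeFn_toLp] with p hCF1 hX
      rw [hCF1, hX, one_mul]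
    calc Tm (hF_mem.toLp F) = CF (S₀ (hone.toLp _)) := Lp.ext <| by
          filter_upwards [hTmF, coeFn_ae_eq_mul_fst hCF _,
            ae_eq_comp_fst (hS₀ _ measurable_const (fun _ => rfl) hone)] with p hT hCFS hS
          rw [hT, hCFS, hS, mul_one]
      _ = Ut (hF_mem.toLp F) := by rw [h, hCF_one]

/-- Theorem 4.7, first part: for `F ∈ H_Z` with `p₂(F) ∈ L^∞(𝕋)` and
`C_F : L²(𝕋) → H_Z` the bounded operator `C_F(α) = π_Z(α)F`, the following are equivalent:
(i) `M̃(F) = F`, where `M̃ = Ũ⁻¹ π_Z(m₀)`; (ii) `C_F S₀ = Ũ C_F`. -/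
theorem scaling_eq_iff_intertwines
    (m₀ : ℝ → ℂ)
    (hm_meas : Measurable m₀) (hm_bdd : ∃ C, ∀ ω, ‖m₀ ω‖ ≤ C)
    (hm_per : ∀ ω, m₀ (ω + 2 * π) = m₀ ω)
    (hm_quad : ∀ᵐ ω ∂(volume : Measure ℝ), ‖m₀ ω‖ ^ 2 + ‖m₀ (ω + π)‖ ^ 2 = 2)
    (F : ℝ × ℝ → ℂ) (hF_meas : Measurable F) (hF_qp : QP F)
    (hF_mem : MeasureTheory.MemLp F 2 muZ)
    (hF_p2_bdd : ∃ c : ℝ, ∀ᵐ ω ∂muT, (∫ x in Set.Ioc (0 : ℝ) 1, ‖F (ω, x)‖ ^ 2) ≤ c)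
    (Ut : HZ ≃ₗᵢ[ℂ] HZ) (hUt : IsUt Ut)
    (Tm : HZ →L[ℂ] HZ) (hTm : IsMulOp m₀ Tm)
    (S₀ : L2T →L[ℂ] L2T) (hS₀ : IsSOp m₀ S₀)
    (CF : L2T →L[ℂ] HZ)
    (hCF : ∀ (α : ℝ → ℂ), Measurable α → ∀ hα : MeasureTheory.MemLp α 2 muT,
      ⇑(CF (hα.toLp α)) =ᵐ[muZ] fun p : ℝ × ℝ => α p.1 * F p) :
    Ut.symm (Tm (hF_mem.toLp F)) = hF_mem.toLp F ↔
      ∀ α : L2T, CF (S₀ α) = Ut (CF α) :=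
  scaling_eq_iff_intertwines_general m₀ F hF_meas hF_qp hF_mem Ut hUt Tm hTm S₀ hS₀ CF hCF

end
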